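/- For the base observer O_Base (which accepts a history iff it contains a free(a) of the observed address a not preceded—since the last such free—by a retire of a), a history h is in spec(O_Base) iff in h every free(a) event is preceded by a retire(_, a) event with no free(a) in between. -/
import Mathlib


/-- Events relevant for the base observer: retires, frees, and other events. -/
inductive Ev (Thread Adr : Type*) where
  | retire (t : Thread) (a : Adr)
  | free (a : Adr)
  | other

variable {Thread Adr : Type*}

/-- The locations of the base observer `O_Base`. -/
inductive BaseLoc where
  | init | retired | final
deriving DecidableEq

/-- The (deterministic, with implicit self-loops) transition function of
`O_Base`, parameterized by the observed address `v`:
from `init`, `retire(_, v)` goes to `retired` and `free(v)` goes to the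
accepting location `final`; from `retired`, `free(v)` goes back to `init`;
`final` is trapping; all other events are self-loops. -/
def baseStep [DecidableEq Adr] (v : Adr) : BaseLoc → Ev Thread Adr → BaseLoc
  | .init, .retire _ a => if a = v then .retired else .init
  | .init, .free a => if a = v then .final else .init
  | .retired, .free a => if a = v then .init else .retired
  | .final, _ => .final
  | l, _ => l

/-- The specification of `O_Base`: histories accepted by no instantiation of
the observed address `v`, i.e., no run from the initial location reaches the
accepting location. -/
def specBase [DecidableEq Adr] (h : List (Ev Thread Adr)) : Prop :=
  ∀ v : Adr, h.foldl (baseStep v) BaseLoc.init ≠ BaseLoc.final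

lemma baseStep_final_foldl [DecidableEq Adr] (v : Adr) (l : List (Ev Thread Adr)) :
    l.foldl (baseStep v) BaseLoc.final = BaseLoc.final := by
  induction l with
  | nil => rfl
  | cons e l ih => simpa [baseStep] using ih

lemma foldl_final_split [DecidableEq Adr] (v : Adr) :
    ∀ (l : List (Ev Thread Adr)) (s : BaseLoc), s ≠ BaseLoc.final →
    l.foldl (baseStep v) s = BaseLoc.final →
    ∃ l1 l2, l = l1 ++ Ev.free v :: l2 ∧ l1.foldl (baseStep v) s = BaseLoc.init := by
  intro l
  induction l with
  | nil => intro s hs h; exact absurd h hs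
  | cons e l ih =>
    intro s hs h
    simp only [List.foldl_cons] at h
    by_cases hf : baseStep v s e = BaseLoc.final
    · -- the step into final must be from init via free v
      have : s = BaseLoc.init ∧ e = Ev.free v := by
        cases s <;> cases e <;> simp_all [baseStep] <;> split at hf <;> simp_all
      obtain ⟨rfl, rfl⟩ := this
      exact ⟨[], l, rfl, rfl⟩
    · obtain ⟨l1, l2, rfl, hl1⟩ := ih _ hf h
      exact ⟨e :: l1, l2, rfl, by simpa [baseStep] using hl1⟩

lemma foldl_retired_split [DecidableEq Adr] (v : Adr) :
    ∀ (l : List (Ev Thread Adr)) (s : BaseLoc),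
    l.foldl (baseStep v) s = BaseLoc.retired →
    (∃ (h3 : List (Ev Thread Adr)) (t : Thread) (h4 : List (Ev Thread Adr)),
      l = h3 ++ Ev.retire t v :: h4 ∧ Ev.free v ∉ h4) ∨
    (s = BaseLoc.retired ∧ Ev.free v ∉ l) := by
  intro l
  induction l with
  | nil => intro s h; exact Or.inr ⟨h, by simp⟩
  | cons e l ih =>
    intro s h
    simp only [List.foldl_cons] at h
    rcases ih _ h with ⟨h3, t, h4, rfl, hh4⟩ | ⟨hse, hl⟩
    · exact Or.inl ⟨e :: h3, t, h4, rfl, hh4⟩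
    · -- baseStep v s e = retired
      have : (s = BaseLoc.init ∧ ∃ t, e = Ev.retire t v) ∨
          (s = BaseLoc.retired ∧ e ≠ Ev.free v) := by
        cases s <;> cases e <;> simp_all [baseStep] <;> split at hse <;> simp_all
      rcases this with ⟨rfl, t, rfl⟩ | ⟨rfl, he⟩
      · exact Or.inl ⟨[], t, l, rfl, hl⟩
      · refine Or.inr ⟨rfl, ?_⟩
        simp only [List.mem_cons, not_or]
        exact ⟨fun hh => he hh.symm, hl⟩

lemma foldl_retired_stay [DecidableEq Adr] (v : Adr) :
    ∀ (l : List (Ev Thread Adr)), Ev.free v ∉ l →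
    l.foldl (baseStep v) BaseLoc.retired ≠ BaseLoc.init ∧
    l.foldl (baseStep v) BaseLoc.final ≠ BaseLoc.init := by
  intro l
  induction l with
  | nil => simp
  | cons e l ih =>
    intro hl
    simp only [List.mem_cons, not_or] at hl
    obtain ⟨he, hl⟩ := hl
    have ih' := ih hl
    constructor
    · have : baseStep v BaseLoc.retired e = BaseLoc.retired := by
        cases e with
        | retire t a => rfl
        | other => rfl
        | free a =>
          simp only [baseStep]
          rw [if_neg (fun hh => he (by subst hh; rfl))]
      simpa [this] using ih'.1
    · simpa [baseStep] using ih'.2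

/-- A history `h` is in `spec(O_Base)` iff every `free(a)` event in `h` is
preceded by a `retire(_, a)` event with no `free(a)` in between. -/
theorem specBase_characterization [DecidableEq Adr] (h : List (Ev Thread Adr)) :
    specBase h ↔
      ∀ (h1 : List (Ev Thread Adr)) (a : Adr) (h2 : List (Ev Thread Adr)),
        h = h1 ++ Ev.free a :: h2 →
        ∃ (h3 : List (Ev Thread Adr)) (t : Thread) (h4 : List (Ev Thread Adr)),
          h1 = h3 ++ Ev.retire t a :: h4 ∧ Ev.free a ∉ h4 := by
  constructor
  · intro hs h1 a h2 heq
    subst heq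
    by_contra hc
    push_neg at hc
    apply hs a
    rw [List.foldl_append]
    have h1ne : h1.foldl (baseStep a) BaseLoc.init ≠ BaseLoc.retired := by
      intro hr
      rcases foldl_retired_split a h1 _ hr with ⟨h3, t, h4, hd, hh4⟩ | ⟨hi, _⟩
      · exact hh4 (hc h3 t h4 hd)
      · exact BaseLoc.noConfusion hi
    cases hh1 : h1.foldl (baseStep a) BaseLoc.init with
    | init => simp only [List.foldl_cons, baseStep, if_pos rfl]
              exact baseStep_final_foldl a h2
    | retired => exact absurd hh1 h1ne
    | final => simp only [List.foldl_cons, baseStep]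
               exact baseStep_final_foldl a h2
  · intro hc v hf
    obtain ⟨l1, l2, rfl, hl1⟩ :=
      foldl_final_split v h BaseLoc.init (by simp) hf
    obtain ⟨h3, t, h4, rfl, hh4⟩ := hc l1 v l2 rfl
    rw [List.foldl_append] at hl1
    have hstay := foldl_retired_stay v h4 hh4
    cases hh3 : (h3.foldl (baseStep v) BaseLoc.init) with
    | init =>
        rw [hh3] at hl1
        simp only [List.foldl_cons, baseStep, if_pos rfl] at hl1
        exact hstay.1 hl1
    | retired =>
        rw [hh3] at hl1
        simp only [List.foldl_cons, baseStep] at hl1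
        exact hstay.1 hl1
    | final =>
        rw [hh3] at hl1
        simp only [List.foldl_cons, baseStep] at hl1
        exact hstay.2 hl1
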